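/- arXiv:2602.21274 — 5 statements merged into one kernel-verified Lean document; each statement's English description precedes it below -/
import Mathlib

section
/- det A_n ≠ 0 and, for each j ∈ {1, …, n+1}, Cof_{1,j}[A_n]/det A_n = (∏_{k=2}^{j}(r_{j−1} − β_{k−1}) · ∏_{k=j+1}^{n+1}(β_{k−1} − r_{j−1})) / (∏_{k=1}^{j−1}(r_{j−1} − r_{k−1}) · ∏_{k=j+1}^{n+1}(r_{k−1} − r_{j−1})). In particular, Cof_{1,j}[A_n]/det A_n > 0 for every j ∈ {1, …, n+1}. -/
/-!
Let `F = ∏ k, (X - β k)` and let `c j = F (r j) / ∏ k ≠ j, (r j - r k)` be the coefficients of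
the partial-fraction decomposition `F x / ∏ k, (x - r k) = ∑ j, c j / (x - r j)`. Comparing
leading coefficients gives `∑ j, c j = 1`, and evaluating at the roots `β i` of `F` gives
`∑ j, c j / (β i - r j) = 0`; together these say `A c = e₀`, so `c` is the first column of
`A⁻¹`, i.e. `c j = Cof_{1,j} / det A`. Interlacing makes every factor of `c j` positive once the
products are split at `j`.

For `det A ≠ 0`: if `A u = 0` then, since `β / (β - r) = 1 + r / (β - r)`, the vector
`(r j * u j)` is killed by the Cauchy matrix `1 / (x i - r j)` with `x = (0, β 1, …, β n)`.
A vector `v` killed by a Cauchy matrix is zero: `∑ j, v j / (x - r j)` equals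
`P x / ∏ k, (x - r k)` for a polynomial `P` of degree `≤ n` with `P (r j)` proportional to `v j`,
and this `P` vanishes at the `n + 1` points `x i`.
-/

open Finset Matrix

/-- The (i,j) cofactor of a square matrix: (−1)^(i+j) times the determinant of the
submatrix obtained by deleting row `i` and column `j`. -/
noncomputable def cof {n : ℕ} (M : Matrix (Fin (n + 1)) (Fin (n + 1)) ℝ)
    (i j : Fin (n + 1)) : ℝ :=
  (-1 : ℝ) ^ ((i : ℕ) + (j : ℕ)) * (M.submatrix i.succAbove j.succAbove).det

namespace Lagrange

open Polynomial

variable {F : Type*} [Field F] {ι : Type*} [DecidableEq ι] {s : Finset ι} {y : ι → F}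

theorem eval_div_eval_nodal_eq_sum (hys : Set.InjOn y s) {P : F[X]} (hP : P.degree < #s)
    {x : F} (hx : ∀ i ∈ s, x ≠ y i) :
    P.eval x / (nodal s y).eval x =
      ∑ i ∈ s, P.eval (y i) / (∏ j ∈ s.erase i, (y i - y j)) / (x - y i) := by
  conv_lhs => rw [eq_interpolate hys hP]
  rw [eval_interpolate_not_at_node _ hx, mul_div_cancel_left₀ _ (eval_nodal_not_at_node hx)]
  refine sum_congr rfl fun i _ => ?_
  rw [nodalWeight, prod_inv_distrib]
  ring

theorem eq_zero_of_forall_sum_div_sub_eq_zero (hys : Set.InjOn y s) {x : ι → F}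
    (hxs : Set.InjOn x s) (hxy : ∀ i ∈ s, ∀ j ∈ s, x i ≠ y j) {c : ι → F}
    (hc : ∀ i ∈ s, ∑ j ∈ s, c j / (x i - y j) = 0) : ∀ j ∈ s, c j = 0 := by
  have hprod : ∀ j ∈ s, ∏ k ∈ s.erase j, (y j - y k) ≠ 0 := fun j hj => by
    simpa only [nodalWeight, prod_inv_distrib, ne_eq, inv_eq_zero] using
      nodalWeight_ne_zero hys hj
  set P := interpolate s y fun j => c j * ∏ k ∈ s.erase j, (y j - y k)
  have hPy : ∀ j ∈ s, P.eval (y j) = c j * ∏ k ∈ s.erase j, (y j - y k) := fun j hj =>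
    eval_interpolate_at_node _ hys hj
  have hPdeg : P.degree < #s := degree_interpolate_lt _ hys
  have hP : P = 0 := by
    refine eq_zero_of_degree_lt_of_eval_index_eq_zero s hxs hPdeg fun i hi => ?_
    have h := eval_div_eval_nodal_eq_sum hys hPdeg (hxy i hi)
    rw [sum_congr rfl fun j hj => by rw [hPy j hj, mul_div_cancel_right₀ _ (hprod j hj)],
      hc i hi, div_eq_zero_iff] at h
    exact h.resolve_right (eval_nodal_not_at_node (hxy i hi))
  intro j hj
  simpa [hP, hprod j hj] using (hPy j hj).symm

end Lagrange

theorem cof_eq_adjugate_apply {n : ℕ} (M : Matrix (Fin (n + 1)) (Fin (n + 1)) ℝ)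
    (i j : Fin (n + 1)) : cof M i j = M.adjugate j i := by
  rw [cof, adjugate_fin_succ_eq_det_submatrix]

theorem cof_div_det_eq_of_mulVec_eq_single {n : ℕ} {M : Matrix (Fin (n + 1)) (Fin (n + 1)) ℝ}
    (hM : M.det ≠ 0) {c : Fin (n + 1) → ℝ} {i : Fin (n + 1)} (hc : M *ᵥ c = Pi.single i 1)
    (j : Fin (n + 1)) : cof M i j / M.det = c j := by
  have h : M.adjugate *ᵥ (M *ᵥ c) = M.det • c := by
    rw [mulVec_mulVec, adjugate_mul, smul_mulVec, one_mulVec]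
  rw [hc, mulVec_single_one] at h
  rw [cof_eq_adjugate_apply, div_eq_iff hM, mul_comm]
  simpa using congrFun h j

section

variable {M : Type*} [CommMonoid M] {n j : ℕ}

theorem prod_Icc_one_eq_mul (f : ℕ → M) (hj : j ≤ n) :
    ∏ k ∈ Icc 1 n, f k = (∏ k ∈ Icc 1 j, f k) * ∏ k ∈ Icc (j + 1) n, f k := by
  rw [← prod_union (disjoint_left.mpr fun k hk hk' => by simp at hk hk'; omega)]
  congr 1
  ext k
  simp only [mem_Icc, mem_union]
  omega

theorem prod_range_succ_erase_eq_mul (f : ℕ → M) (hj : j ≤ n) :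
    ∏ k ∈ (range (n + 1)).erase j, f k = (∏ k ∈ range j, f k) * ∏ k ∈ Icc (j + 1) n, f k := by
  rw [← prod_union (disjoint_left.mpr fun k hk hk' => by simp at hk hk'; omega)]
  congr 1
  ext k
  simp only [mem_erase, mem_range, mem_Icc, mem_union]
  omega

end

theorem prod_sub_eq_neg_one_pow_mul_prod_sub {R ι : Type*} [CommRing R] (s : Finset ι) (a : R)
    (f : ι → R) :
    ∏ k ∈ s, (a - f k) = (-1) ^ #s * ∏ k ∈ s, (f k - a) := by
  rw [← prod_neg]
  simp_rw [neg_sub]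

def Interlaced (n : ℕ) (β r : ℕ → ℝ) : Prop :=
  ∀ k, 1 ≤ k → k ≤ n → r (k - 1) < β k ∧ β k < r k

noncomputable def interlacingMatrix (n : ℕ) (β r : ℕ → ℝ) : Matrix (Fin (n + 1)) (Fin (n + 1)) ℝ :=
  Matrix.of fun i j => if (i : ℕ) = 0 then 1 else β i / (β i - r j)

noncomputable def partialFractionCoeff (n : ℕ) (β r : ℕ → ℝ) (j : ℕ) : ℝ :=
  (Lagrange.nodal (Icc 1 n) β).eval (r j) / ∏ k ∈ (range (n + 1)).erase j, (r j - r k)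

theorem degree_nodal_Icc_lt_card_range (n : ℕ) (β : ℕ → ℝ) :
    (Lagrange.nodal (Icc 1 n) β).degree < #(range (n + 1)) := by
  rw [Lagrange.degree_nodal, card_range, Nat.card_Icc, Nat.add_sub_cancel]
  exact_mod_cast n.lt_succ_self

theorem partialFractionCoeff_eq {n : ℕ} (β r : ℕ → ℝ) {j : ℕ} (hj : j ≤ n) :
    partialFractionCoeff n β r j =
      ((∏ k ∈ Icc 1 j, (r j - β k)) * ∏ k ∈ Icc (j + 1) n, (β k - r j)) /
        ((∏ k ∈ range j, (r j - r k)) * ∏ k ∈ Icc (j + 1) n, (r k - r j)) := by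
  have hsign : ((-1 : ℝ) ^ #(Icc (j + 1) n)) ≠ 0 := pow_ne_zero _ (by norm_num)
  rw [partialFractionCoeff, Lagrange.eval_nodal, prod_Icc_one_eq_mul _ hj,
    prod_range_succ_erase_eq_mul _ hj,
    prod_sub_eq_neg_one_pow_mul_prod_sub (Icc (j + 1) n) (r j) β,
    prod_sub_eq_neg_one_pow_mul_prod_sub (Icc (j + 1) n) (r j) r, mul_left_comm,
    mul_left_comm (∏ k ∈ range j, _), mul_div_mul_left _ _ hsign]

namespace Interlaced

variable {n : ℕ} {β r : ℕ → ℝ}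

theorem strictMonoOn_r (h : Interlaced n β r) : StrictMonoOn r (Set.Iic n) :=
  strictMonoOn_Iic_of_lt_succ fun m hm => by
    simpa using (h (m + 1) (by omega) (by omega)).elim lt_trans

theorem r_lt_β (h : Interlaced n β r) {j k : ℕ} (hjk : j < k) (hk : k ≤ n) : r j < β k :=
  (h.strictMonoOn_r.monotoneOn (by simp; omega) (by simp; omega) (by omega : j ≤ k - 1)).trans_lt
    (h k (by omega) hk).1

theorem β_lt_r (h : Interlaced n β r) {j k : ℕ} (hk : 1 ≤ k) (hkj : k ≤ j) (hj : j ≤ n) :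
    β k < r j :=
  (h k hk (hkj.trans hj)).2.trans_le
    (h.strictMonoOn_r.monotoneOn (by simp; omega) (by simpa using hj) hkj)

theorem β_ne_r (h : Interlaced n β r) {j k : ℕ} (hk : 1 ≤ k) (hkn : k ≤ n) (hj : j ≤ n) :
    β k ≠ r j := by
  rcases lt_or_ge j k with hjk | hkj
  · exact (h.r_lt_β hjk hkn).ne'
  · exact (h.β_lt_r hk hkj hj).ne

theorem r_pos (h : Interlaced n β r) (hr0 : 0 < r 0) {j : ℕ} (hj : j ≤ n) : 0 < r j :=
  hr0.trans_le (h.strictMonoOn_r.monotoneOn (by simp) (by simpa using hj) (Nat.zero_le j))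

theorem strictMonoOn_β_update_zero (h : Interlaced n β r) (hr0 : 0 < r 0) :
    StrictMonoOn (Function.update β 0 0) (Set.Iic n) :=
  strictMonoOn_Iic_of_lt_succ fun m hm => by
    rcases Nat.eq_zero_or_pos m with rfl | hm0
    · simpa using hr0.trans (h 1 le_rfl (by omega)).1
    · simpa [hm0.ne'] using (h m hm0 hm.le).2.trans (h.r_lt_β (Nat.lt_succ_self m) (by omega))

theorem injOn_range (h : Interlaced n β r) : Set.InjOn r (range (n + 1)) :=
  h.strictMonoOn_r.injOn.mono fun k hk => by simpa [Nat.lt_succ_iff] using hk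

theorem sum_partialFractionCoeff (h : Interlaced n β r) :
    ∑ j ∈ range (n + 1), partialFractionCoeff n β r j = 1 := by
  have hcoeff := Lagrange.coeff_eq_sum h.injOn_range (degree_nodal_Icc_lt_card_range n β)
  rw [card_range, Nat.add_sub_cancel] at hcoeff
  unfold partialFractionCoeff
  rw [← hcoeff]
  simpa [Lagrange.natDegree_nodal] using
    (Lagrange.nodal_monic (s := Icc 1 n) (v := β)).coeff_natDegree

theorem sum_partialFractionCoeff_div_sub_eq_zero (h : Interlaced n β r) {i : ℕ} (hi : 1 ≤ i)
    (hin : i ≤ n) : ∑ j ∈ range (n + 1), partialFractionCoeff n β r j / (β i - r j) = 0 := by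
  have hβ : ∀ j ∈ range (n + 1), β i ≠ r j := fun j hj =>
    h.β_ne_r hi hin (Nat.lt_succ_iff.mp (mem_range.mp hj))
  have hroot : (Lagrange.nodal (Icc 1 n) β).eval (β i) = 0 :=
    Lagrange.eval_nodal_at_node (mem_Icc.mpr ⟨hi, hin⟩)
  simpa [hroot, partialFractionCoeff] using
    (Lagrange.eval_div_eval_nodal_eq_sum h.injOn_range (degree_nodal_Icc_lt_card_range n β) hβ).symm

theorem interlacingMatrix_mulVec_partialFractionCoeff (h : Interlaced n β r) :
    interlacingMatrix n β r *ᵥ (fun j : Fin (n + 1) => partialFractionCoeff n β r j) =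
      Pi.single 0 1 := by
  funext i
  rcases Fin.eq_zero_or_eq_succ i with rfl | ⟨i, rfl⟩
  · simp only [mulVec, dotProduct, interlacingMatrix, of_apply, Fin.val_zero, if_true, one_mul,
      Pi.single_eq_same]
    rw [Fin.sum_univ_eq_sum_range (fun j => partialFractionCoeff n β r j),
      h.sum_partialFractionCoeff]
  · simp only [mulVec, dotProduct, interlacingMatrix, of_apply, Fin.val_succ,
      Nat.add_one_ne_zero, if_false, Pi.single_apply, Fin.succ_ne_zero]
    rw [Fin.sum_univ_eq_sum_range
      (fun j => β (i + 1) / (β (i + 1) - r j) * partialFractionCoeff n β r j)]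
    simp_rw [div_mul_eq_mul_div, mul_div_assoc]
    rw [← mul_sum, h.sum_partialFractionCoeff_div_sub_eq_zero (by omega) (by omega), mul_zero]

theorem partialFractionCoeff_pos (h : Interlaced n β r) {j : ℕ} (hj : j ≤ n) :
    0 < partialFractionCoeff n β r j := by
  rw [partialFractionCoeff_eq β r hj]
  refine div_pos (mul_pos (prod_pos fun k hk => ?_) (prod_pos fun k hk => ?_))
    (mul_pos (prod_pos fun k hk => ?_) (prod_pos fun k hk => ?_)) <;>
    simp only [mem_Icc, mem_range] at hk <;> rw [sub_pos]
  · exact h.β_lt_r hk.1 hk.2 hj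
  · exact h.r_lt_β (by omega) hk.2
  · exact h.strictMonoOn_r (by simp; omega) (by simpa using hj) hk
  · exact h.strictMonoOn_r (by simpa using hj) (by simpa using hk.2) (by omega)

theorem sum_mul_div_update_sub_eq_zero (h : Interlaced n β r) (hr0 : 0 < r 0)
    {u : Fin (n + 1) → ℝ} (hAu : interlacingMatrix n β r *ᵥ u = 0) (i : Fin (n + 1)) :
    ∑ j : Fin (n + 1), r j * u j / (Function.update β 0 0 i - r j) = 0 := by
  have hrow : ∀ i, ∑ j, interlacingMatrix n β r i j * u j = 0 := fun i => congrFun hAu i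
  have hsum : ∑ j, u j = 0 := by simpa [interlacingMatrix] using hrow 0
  rcases Fin.eq_zero_or_eq_succ i with rfl | ⟨i, rfl⟩
  · calc ∑ j : Fin (n + 1), r j * u j / (Function.update β 0 0 0 - r j) = ∑ j, -u j :=
          sum_congr rfl fun j _ => by
            simp [div_neg, mul_div_cancel_left₀ _ (h.r_pos hr0 j.is_le).ne']
      _ = 0 := by rw [sum_neg_distrib, hsum, neg_zero]
  · have hrow_i := hrow i.succ
    simp only [interlacingMatrix, of_apply, Fin.val_succ, Nat.add_one_ne_zero, if_false]
      at hrow_i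
    calc ∑ j : Fin (n + 1), r j * u j / (Function.update β 0 0 (i.succ : ℕ) - r j)
        = ∑ j : Fin (n + 1), (β (i + 1) / (β (i + 1) - r j) * u j - u j) :=
          sum_congr rfl fun j _ => by
            have hne : β (i + 1) - r j ≠ 0 :=
              sub_ne_zero.mpr (h.β_ne_r (by omega) (by omega) j.is_le)
            rw [Fin.val_succ, Function.update_of_ne (Nat.add_one_ne_zero _)]
            field_simp
            ring
      _ = 0 := by rw [sum_sub_distrib, hrow_i, hsum, sub_zero]

theorem det_interlacingMatrix_ne_zero (h : Interlaced n β r) (hr0 : 0 < r 0) :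
    (interlacingMatrix n β r).det ≠ 0 := by
  rw [Ne, ← exists_mulVec_eq_zero_iff]
  rintro ⟨u, hu, hAu⟩
  set x : Fin (n + 1) → ℝ := fun i => Function.update β 0 0 i
  set y : Fin (n + 1) → ℝ := fun j => r j
  have hx : Set.InjOn x (univ : Finset (Fin (n + 1))) := fun a _ b _ hab =>
    Fin.ext ((h.strictMonoOn_β_update_zero hr0).injOn (by simpa using a.is_le)
      (by simpa using b.is_le) hab)
  have hy : Set.InjOn y (univ : Finset (Fin (n + 1))) := fun a _ b _ hab =>
    Fin.ext (h.strictMonoOn_r.injOn (by simpa using a.is_le) (by simpa using b.is_le) hab)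
  have hxy : ∀ i ∈ univ, ∀ j ∈ univ, x i ≠ y j := by
    intro i _ j _
    rcases Fin.eq_zero_or_eq_succ i with rfl | ⟨i, rfl⟩
    · simpa [x] using (h.r_pos hr0 j.is_le).ne
    · simpa [x] using h.β_ne_r (by omega) (by omega) j.is_le
  have hv := Lagrange.eq_zero_of_forall_sum_div_sub_eq_zero hy hx hxy
    fun i _ => h.sum_mul_div_update_sub_eq_zero hr0 hAu i
  exact hu (funext fun j => by simpa [y, (h.r_pos hr0 j.is_le).ne'] using hv j (mem_univ j))

end Interlaced

theorem stmt0_general (n : ℕ) (β r : ℕ → ℝ)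
    (hr0 : 0 < r 0)
    (hinter : ∀ k, 1 ≤ k → k ≤ n → r (k - 1) < β k ∧ β k < r k)
    (A : Matrix (Fin (n + 1)) (Fin (n + 1)) ℝ)
    (hA : ∀ i j : Fin (n + 1), A i j = if (i : ℕ) = 0 then 1 else β i / (β i - r j)) :
    A.det ≠ 0 ∧
      ∀ j : Fin (n + 1),
        cof A 0 j / A.det =
          ((∏ k ∈ Finset.Icc 1 (j : ℕ), (r j - β k)) *
              ∏ k ∈ Finset.Icc ((j : ℕ) + 1) n, (β k - r j)) /
            ((∏ k ∈ Finset.range (j : ℕ), (r j - r k)) *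
              ∏ k ∈ Finset.Icc ((j : ℕ) + 1) n, (r k - r j)) ∧
        0 < cof A 0 j / A.det := by
  have h : Interlaced n β r := hinter
  obtain rfl : A = interlacingMatrix n β r := Matrix.ext hA
  have hdet := h.det_interlacingMatrix_ne_zero hr0
  refine ⟨hdet, fun j => ?_⟩
  rw [cof_div_det_eq_of_mulVec_eq_single hdet h.interlacingMatrix_mulVec_partialFractionCoeff,
    ← partialFractionCoeff_eq β r j.is_le]
  exact ⟨rfl, h.partialFractionCoeff_pos j.is_le⟩

theorem stmt0 (n : ℕ) (hn : 1 ≤ n) (β r : ℕ → ℝ)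
    (hr0 : 0 < r 0)
    (hinter : ∀ k, 1 ≤ k → k ≤ n → r (k - 1) < β k ∧ β k < r k)
    (A : Matrix (Fin (n + 1)) (Fin (n + 1)) ℝ)
    (hA : ∀ i j : Fin (n + 1), A i j = if (i : ℕ) = 0 then 1 else β i / (β i - r j)) :
    A.det ≠ 0 ∧
      ∀ j : Fin (n + 1),
        cof A 0 j / A.det =
          ((∏ k ∈ Finset.Icc 1 (j : ℕ), (r j - β k)) *
              ∏ k ∈ Finset.Icc ((j : ℕ) + 1) n, (β k - r j)) /
            ((∏ k ∈ Finset.range (j : ℕ), (r j - r k)) *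
              ∏ k ∈ Finset.Icc ((j : ℕ) + 1) n, (r k - r j)) ∧
        0 < cof A 0 j / A.det :=
  stmt0_general n β r hr0 hinter A hA
end

section
/- For each fixed j ∈ {1, …, n+1}, let A_n^j[𝟙] denote the matrix obtained from A_n by replacing its j-th column by the column vector all of whose entries equal 1. Then det A_n^j[𝟙] = (R^n/r_{j−1})·Cof_{1,j}[A_n]. -/
/-!
Subtracting the column of ones from every other column leaves a unit vector in the first row
and turns the entries `β i / (β i - r k)` into `r k / (β i - r k)`. After expanding along the
first row, both `det A_n^j[𝟙]` and `Cof_{1,j}[A_n]` are `(-1)^j` times the Cauchy-type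
determinant `det (1 / (β i - r k))` over `k ≠ j`, scaled by `∏_{k ≠ j} r k` and `∏ β i`
respectively; the quotient of these products is `R^n / r j`.
-/

open Finset Matrix

theorem Matrix.det_updateCol_one_of_row_zero_eq_one {R : Type*} [CommRing R] {n : ℕ}
    (M : Matrix (Fin (n + 1)) (Fin (n + 1)) R) (hM : ∀ k, M 0 k = 1) (j : Fin (n + 1)) :
    (M.updateCol j fun _ => 1).det =
      (-1) ^ (j : ℕ) * (of fun i k => M i.succ (j.succAbove k) - 1).det := by
  set N : Matrix (Fin (n + 1)) (Fin (n + 1)) R := of fun i k => if k = j then 1 else M i k - 1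
  have hcols : (M.updateCol j fun _ => 1).det = N.det := by
    rw [← det_transpose, ← det_transpose N]
    refine det_eq_of_forall_row_eq_smul_add_const (fun k => if k = j then 0 else 1) j
      (if_pos rfl) fun k i => ?_
    by_cases hkj : k = j <;> simp [N, hkj]
  rw [hcols, det_succ_row_zero, Finset.sum_eq_single j]
  · have hminor :
        N.submatrix Fin.succ j.succAbove = of fun i k => M i.succ (j.succAbove k) - 1 := by
      ext i k
      simp [N, Fin.succAbove_ne]
    simp [hminor, N]
  · intro k _ hkj
    simp [N, hkj, hM]
  · simp

theorem Matrix.prod_mul_det_div_sub_sub_one {K : Type*} [Field K] {n : ℕ} (b c : Fin n → K)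
    (hbc : ∀ i k, b i ≠ c k) :
    (∏ i, b i) * (of fun i k => b i / (b i - c k) - 1).det =
      (∏ k, c k) * (of fun i k => b i / (b i - c k)).det := by
  set C : Matrix (Fin n) (Fin n) K := of fun i k => (b i - c k)⁻¹
  have hleft : (of fun i k => b i / (b i - c k) - 1) = of fun i k => c k * C i k := by
    ext i k
    simp only [C, of_apply]
    field_simp [sub_ne_zero.mpr (hbc i k)]
    ring
  have hright : (of fun i k => b i / (b i - c k)) = of fun i k => b i * C i k := by
    ext i k
    exact div_eq_mul_inv _ _
  rw [hleft, hright, det_mul_row, det_mul_column]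
  ring

def Interlaces (n : ℕ) (β r : ℕ → ℝ) : Prop :=
  ∀ k, 1 ≤ k → k ≤ n → r (k - 1) < β k ∧ β k < r k

namespace Interlaces

variable {n : ℕ} {β r : ℕ → ℝ}

theorem r_le (h : Interlaces n β r) {a b : ℕ} (hab : a ≤ b) (hb : b ≤ n) : r a ≤ r b := by
  induction b, hab using Nat.le_induction with
  | base => exact le_rfl
  | succ b _ ih =>
    obtain ⟨hlow, hhigh⟩ := h (b + 1) (by omega) hb
    exact (ih (by omega)).trans (by simpa using (hlow.trans hhigh).le)

theorem β_ne_r (h : Interlaces n β r) {i k : ℕ} (hi : 1 ≤ i) (hin : i ≤ n) (hk : k ≤ n) :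
    β i ≠ r k := by
  obtain ⟨hlow, hhigh⟩ := h i hi hin
  rcases lt_or_ge k i with hki | hik
  · exact ((h.r_le (by omega : k ≤ i - 1) (by omega)).trans_lt hlow).ne'
  · exact (hhigh.trans_le (h.r_le hik hk)).ne

theorem r_pos (h : Interlaces n β r) (hr0 : 0 < r 0) {k : ℕ} (hk : k ≤ n) : 0 < r k :=
  hr0.trans_le (h.r_le (Nat.zero_le k) hk)

theorem β_pos (h : Interlaces n β r) (hr0 : 0 < r 0) {i : ℕ} (hi : 1 ≤ i) (hin : i ≤ n) :
    0 < β i :=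
  (h.r_pos hr0 (by omega : i - 1 ≤ n)).trans (h i hi hin).1

end Interlaces

theorem stmt2_general (n : ℕ) (β r : ℕ → ℝ)
    (hr0 : 0 < r 0)
    (hinter : ∀ k, 1 ≤ k → k ≤ n → r (k - 1) < β k ∧ β k < r k)
    (A : Matrix (Fin (n + 1)) (Fin (n + 1)) ℝ)
    (hA : ∀ i j : Fin (n + 1), A i j = if (i : ℕ) = 0 then 1 else β i / (β i - r j))
    (R : ℝ)
    (hR : R = (∏ k ∈ Finset.range (n + 1), r k) / ∏ k ∈ Finset.Icc 1 n, β k) :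
    ∀ j : Fin (n + 1),
      (A.updateCol j (fun _ => (1 : ℝ))).det = (R / r j) * cof A 0 j := by
  intro j
  set b : Fin n → ℝ := fun i => β (i + 1)
  set c : Fin n → ℝ := fun k => r (j.succAbove k)
  have hrow : ∀ k, A 0 k = 1 := fun k => by simp [hA]
  have hminor : (of fun i k => A i.succ (j.succAbove k) - 1) =
      of fun i k => b i / (b i - c k) - 1 := by
    ext i k
    simp [hA, b, c]
  have hcof : cof A 0 j = (-1) ^ (j : ℕ) * (of fun i k => b i / (b i - c k)).det := by
    have hsub : A.submatrix Fin.succ j.succAbove = of fun i k => b i / (b i - c k) := by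
      ext i k
      simp [hA, b, c]
    simp [cof, hsub]
  have hbc : ∀ i k, b i ≠ c k := fun i k =>
    Interlaces.β_ne_r hinter (by omega) (by omega) (by omega)
  have hb : ∏ i, b i ≠ 0 := prod_ne_zero_iff.mpr fun i _ =>
    (Interlaces.β_pos hinter hr0 (by omega) (by omega)).ne'
  have hrj : r j ≠ 0 := (Interlaces.r_pos hinter hr0 (by omega)).ne'
  have hβprod : ∏ k ∈ Icc 1 n, β k = ∏ i, b i := by
    rw [← Ico_add_one_right_eq_Icc, prod_Ico_eq_prod_range, ← Fin.prod_univ_eq_prod_range]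
    simp [b, add_comm]
  have hrprod : ∏ k ∈ range (n + 1), r k = r j * ∏ k, c k :=
    (Fin.prod_univ_eq_prod_range r (n + 1)).symm.trans (Fin.prod_univ_succAbove _ j)
  rw [det_updateCol_one_of_row_zero_eq_one A hrow, hminor, hcof, hR, hβprod, hrprod]
  field_simp
  linear_combination prod_mul_det_div_sub_sub_one b c hbc

theorem stmt2 (n : ℕ) (hn : 1 ≤ n) (β r : ℕ → ℝ)
    (hr0 : 0 < r 0)
    (hinter : ∀ k, 1 ≤ k → k ≤ n → r (k - 1) < β k ∧ β k < r k)
    (A : Matrix (Fin (n + 1)) (Fin (n + 1)) ℝ)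
    (hA : ∀ i j : Fin (n + 1), A i j = if (i : ℕ) = 0 then 1 else β i / (β i - r j))
    (R : ℝ)
    (hR : R = (∏ k ∈ Finset.range (n + 1), r k) / ∏ k ∈ Finset.Icc 1 n, β k) :
    ∀ j : Fin (n + 1),
      (A.updateCol j (fun _ => (1 : ℝ))).det = (R / r j) * cof A 0 j :=
  stmt2_general n β r hr0 hinter A hA R hR
end

section
/- For every j ∈ {1, …, n+1}, R^n = r_{j−1}·(1 + ∑_{i=2}^{n+1} M_{i−1}^n/(β_{i−1} − r_{j−1})). -/
/-!
`-R` and the `-M i` are the residues at `0` and at the `β i` of the rational function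
`∏ₖ (X - r k) / (X ∏ₖ (X - β k))`, whose numerator and denominator are monic of the same degree.
Lagrange interpolation of the numerator at the poles gives the partial fraction expansion
`1 - R / x - ∑ᵢ M i / (x - β i)`, and the identity is this expansion evaluated at a zero `x = r j`;
interlacing makes the poles distinct and different from the `r j`.
-/

open Finset Polynomial Lagrange

namespace Lagrange

variable {F ι : Type*} [Field F] [DecidableEq ι] {s : Finset ι} {v : ι → F} {p : F[X]} {x : F}

theorem eval_eq_eval_nodal_mul_of_monic (hvs : Set.InjOn v s) (hp : p.Monic)
    (hdeg : p.natDegree = #s) (hx : ∀ i ∈ s, x ≠ v i) :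
    p.eval x = (nodal s v).eval x *
      (1 + ∑ i ∈ s, nodalWeight s v i * p.eval (v i) / (x - v i)) := by
  have hlt : (p - nodal s v).degree < #s := by
    have hpdeg : p.degree = #s := by rw [degree_eq_natDegree hp.ne_zero, hdeg]
    simpa [hpdeg] using degree_sub_lt_left (hpdeg.trans degree_nodal.symm) hp.ne_zero
      (by rw [hp.leadingCoeff, nodal_monic.leadingCoeff])
  have hnodes : ∀ i ∈ s, (p - nodal s v).eval (v i) = p.eval (v i) := fun i hi => by
    rw [eval_sub, eval_nodal_at_node hi, sub_zero]
  calc p.eval x = (nodal s v).eval x + (p - nodal s v).eval x := by rw [eval_sub, add_sub_cancel]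
    _ = (nodal s v).eval x + (nodal s v).eval x *
          ∑ i ∈ s, nodalWeight s v i * (x - v i)⁻¹ * (p - nodal s v).eval (v i) := by
      rw [← eval_interpolate_not_at_node _ hx, ← eq_interpolate hvs hlt]
    _ = _ := by
      rw [sum_congr rfl fun i hi => by rw [hnodes i hi, mul_right_comm, ← div_eq_mul_inv]]
      ring

theorem one_add_sum_eq_zero_of_monic_of_isRoot (hvs : Set.InjOn v s) (hp : p.Monic)
    (hdeg : p.natDegree = #s) (hx : ∀ i ∈ s, x ≠ v i) (hroot : p.IsRoot x) :
    1 + ∑ i ∈ s, nodalWeight s v i * p.eval (v i) / (x - v i) = 0 := by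
  have := eval_eq_eval_nodal_mul_of_monic hvs hp hdeg hx
  rw [hroot.eq_zero, eq_comm, mul_eq_zero] at this
  exact this.resolve_left (eval_nodal_not_at_node hx)

end Lagrange

theorem prod_sub_swap {R ι : Type*} [CommRing R] (s : Finset ι) (f g : ι → R) :
    ∏ k ∈ s, (f k - g k) = (-1) ^ #s * ∏ k ∈ s, (g k - f k) := by
  rw [← prod_neg]; simp_rw [neg_sub]

-- The poles `0, β 1, …, β n` are indexed by `range (n + 1)` as `Function.update β 0 0`.
section Interlacing

variable {n : ℕ} {β r : ℕ → ℝ}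

theorem strictMonoOn_of_interlace (hinter : ∀ k, 1 ≤ k → k ≤ n → r (k - 1) < β k ∧ β k < r k) :
    StrictMonoOn r (Set.Iic n) :=
  strictMonoOn_Iic_of_lt_succ fun m hm => by
    have := hinter (m + 1) (by omega) hm
    simp only [Nat.add_sub_cancel] at this
    exact this.1.trans this.2

theorem update_zero_lt_of_interlace (hr0 : 0 < r 0)
    (hinter : ∀ k, 1 ≤ k → k ≤ n → r (k - 1) < β k ∧ β k < r k) {i k : ℕ} (hik : i ≤ k)
    (hk : k ≤ n) : Function.update β 0 0 i < r k := by
  have hr : r i ≤ r k := (strictMonoOn_of_interlace hinter).monotoneOn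
    (Set.mem_Iic.2 (hik.trans hk)) (Set.mem_Iic.2 hk) hik
  rcases Nat.eq_zero_or_pos i with rfl | hi
  · simpa using hr0.trans_le hr
  · rw [Function.update_of_ne hi.ne']
    exact (hinter i hi (hik.trans hk)).2.trans_le hr

theorem lt_update_zero_of_interlace (hinter : ∀ k, 1 ≤ k → k ≤ n → r (k - 1) < β k ∧ β k < r k)
    {i k : ℕ} (hki : k < i) (hi : i ≤ n) : r k < Function.update β 0 0 i := by
  have hr : r k ≤ r (i - 1) := (strictMonoOn_of_interlace hinter).monotoneOn
    (Set.mem_Iic.2 (by omega)) (Set.mem_Iic.2 (by omega)) (by omega)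
  rw [Function.update_of_ne (by omega)]
  exact hr.trans_lt (hinter i (by omega) hi).1

theorem strictMonoOn_update_zero_of_interlace (hr0 : 0 < r 0)
    (hinter : ∀ k, 1 ≤ k → k ≤ n → r (k - 1) < β k ∧ β k < r k) :
    StrictMonoOn (Function.update β 0 0) (Set.Iic n) :=
  strictMonoOn_Iic_of_lt_succ fun m hm =>
    (update_zero_lt_of_interlace hr0 hinter le_rfl hm.le).trans
      (lt_update_zero_of_interlace hinter (Order.lt_succ m) (Order.succ_le_of_lt hm))

end Interlacing

section NodalWeights

variable {n : ℕ} {β r : ℕ → ℝ}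

theorem range_succ_erase_zero : (range (n + 1)).erase 0 = Icc 1 n := by
  ext; simp; omega

theorem nodalWeight_zero_mul_eval_zero :
    nodalWeight (range (n + 1)) (Function.update β 0 0) 0 * (nodal (range (n + 1)) r).eval 0 =
      -((∏ k ∈ range (n + 1), r k) / ∏ k ∈ Icc 1 n, β k) := by
  have hweight : nodalWeight (range (n + 1)) (Function.update β 0 0) 0 =
      (∏ k ∈ Icc 1 n, -β k)⁻¹ := by
    rw [nodalWeight, range_succ_erase_zero, ← prod_inv_distrib]
    refine prod_congr rfl fun k hk => ?_
    rw [Function.update_self, Function.update_of_ne (Nat.one_le_iff_ne_zero.1 (mem_Icc.1 hk).1), zero_sub]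
  rw [hweight, eval_nodal, prod_congr rfl fun k _ => zero_sub (r k), prod_neg, prod_neg,
    card_range, Nat.card_Icc, Nat.add_sub_cancel, pow_succ, mul_inv, ← inv_pow, inv_neg, inv_one]
  have hsq : (-1 : ℝ) ^ n * (-1) ^ n = 1 := by rw [← mul_pow]; simp
  linear_combination (-(∏ k ∈ range (n + 1), r k) / ∏ k ∈ Icc 1 n, β k) * hsq

theorem nodalWeight_mul_eval_of_mem {i : ℕ} (hi : 1 ≤ i) (hin : i ≤ n) :
    nodalWeight (range (n + 1)) (Function.update β 0 0) i * (nodal (range (n + 1)) r).eval (β i) =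
      -(((∏ k ∈ range i, (β i - r k)) * ∏ k ∈ Icc i n, (r k - β i)) /
        (β i * (∏ k ∈ Ico 1 i, (β i - β k)) * ∏ k ∈ Icc (i + 1) n, (β k - β i))) := by
  set E := ∏ k ∈ (range (n + 1)).erase i, (β i - Function.update β 0 0 k) with hE
  have hweight : nodalWeight (range (n + 1)) (Function.update β 0 0) i = E⁻¹ := by
    rw [nodalWeight, prod_inv_distrib, Function.update_of_ne (by omega)]
  have hnum : (∏ k ∈ range i, (β i - r k)) * ∏ k ∈ Icc i n, (r k - β i) =
      (-1) ^ (n - i) * -∏ k ∈ range (n + 1), (β i - r k) := by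
    rw [prod_sub_swap (Icc i n), Nat.card_Icc, show n + 1 - i = n - i + 1 by omega, pow_succ,
      ← Ico_add_one_right_eq_Icc, mul_left_comm, prod_range_mul_prod_Ico _ (by omega)]
    ring
  have hden : β i * (∏ k ∈ Ico 1 i, (β i - β k)) * ∏ k ∈ Icc (i + 1) n, (β k - β i) =
      (-1) ^ (n - i) * E := by
    have herase : (range (n + 1)).erase i = insert 0 (Ico 1 i ∪ Icc (i + 1) n) := by
      ext; simp; omega
    rw [prod_sub_swap (Icc (i + 1) n), Nat.card_Icc, Nat.add_sub_add_right, hE, herase,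
      prod_insert (by simp), prod_union (disjoint_left.2 fun k => by simp; omega)]
    have hupdate (t : Finset ℕ) (ht : 0 ∉ t) :
        ∏ k ∈ t, (β i - Function.update β 0 0 k) = ∏ k ∈ t, (β i - β k) :=
      prod_congr rfl fun k hk => by rw [Function.update_of_ne (ne_of_mem_of_not_mem hk ht)]
    rw [Function.update_self, sub_zero, hupdate _ (by simp), hupdate _ (by simp)]
    ring
  rw [hweight, eval_nodal, hnum, hden, mul_div_mul_left _ _ (by simp), neg_div, neg_neg,
    inv_mul_eq_div]

end NodalWeights

theorem stmt4_general (n : ℕ) (β r : ℕ → ℝ)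
    (hr0 : 0 < r 0)
    (hinter : ∀ k, 1 ≤ k → k ≤ n → r (k - 1) < β k ∧ β k < r k)
    (R : ℝ)
    (hR : R = (∏ k ∈ Finset.range (n + 1), r k) / ∏ k ∈ Finset.Icc 1 n, β k)
    (M : ℕ → ℝ)
    (hM : ∀ i, 1 ≤ i → i ≤ n →
      M i = ((∏ k ∈ Finset.range i, (β i - r k)) * ∏ k ∈ Finset.Icc i n, (r k - β i)) /
        (β i * (∏ k ∈ Finset.Ico 1 i, (β i - β k)) * ∏ k ∈ Finset.Icc (i + 1) n, (β k - β i))) :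
    ∀ j, j ≤ n → R = r j * (1 + ∑ i ∈ Finset.Icc 1 n, M i / (β i - r j)) := by
  intro j hj
  have hvs : Set.InjOn (Function.update β 0 0) (range (n + 1)) :=
    (strictMonoOn_update_zero_of_interlace hr0 hinter).injOn.mono fun _ hi =>
      Nat.le_of_lt_succ (mem_range.1 hi)
  have hx : ∀ i ∈ range (n + 1), r j ≠ Function.update β 0 0 i := fun i hi => by
    rcases le_or_gt i j with hij | hji
    · exact (update_zero_lt_of_interlace hr0 hinter hij hj).ne'
    · exact (lt_update_zero_of_interlace hinter hji (Nat.le_of_lt_succ (mem_range.1 hi))).ne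
  have hexpansion := one_add_sum_eq_zero_of_monic_of_isRoot hvs nodal_monic natDegree_nodal hx
    (eval_nodal_at_node (mem_range.2 (Nat.lt_succ_of_le hj)))
  rw [← add_sum_erase _ _ (mem_range.2 n.succ_pos), range_succ_erase_zero, Function.update_self,
    sub_zero, nodalWeight_zero_mul_eval_zero, ← hR] at hexpansion
  rw [sum_congr rfl fun i hi => by
    obtain ⟨hi1, hin⟩ := mem_Icc.1 hi
    rw [Function.update_of_ne (by omega), nodalWeight_mul_eval_of_mem hi1 hin, ← hM i hi1 hin,
      neg_div, ← div_neg, neg_sub]] at hexpansion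
  have hrj : r j ≠ 0 := by simpa using hx 0 (by simp)
  field_simp at hexpansion
  linear_combination -hexpansion

theorem stmt4 (n : ℕ) (hn : 1 ≤ n) (β r : ℕ → ℝ)
    (hr0 : 0 < r 0)
    (hinter : ∀ k, 1 ≤ k → k ≤ n → r (k - 1) < β k ∧ β k < r k)
    (R : ℝ)
    (hR : R = (∏ k ∈ Finset.range (n + 1), r k) / ∏ k ∈ Finset.Icc 1 n, β k)
    (M : ℕ → ℝ)
    (hM : ∀ i, 1 ≤ i → i ≤ n →
      M i = ((∏ k ∈ Finset.range i, (β i - r k)) * ∏ k ∈ Finset.Icc i n, (r k - β i)) /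
        (β i * (∏ k ∈ Finset.Ico 1 i, (β i - β k)) * ∏ k ∈ Finset.Icc (i + 1) n, (β k - β i))) :
    ∀ j, j ≤ n → R = r j * (1 + ∑ i ∈ Finset.Icc 1 n, M i / (β i - r j)) :=
  stmt4_general n β r hr0 hinter R hR M hM
end

section
/- There exists a unique real number x̃₀ > 0 such that ρ/x̃₀ + λ_n ∑_{i=1}^{m_n} ω_i^n/(β_i^n + x̃₀) = σ·x̃₀/2 + μ, and there exists a unique real number x̃₁ < 0 such that ρ/x̃₁ − λ_p ∑_{i=1}^{m_p} ω_i^p/(β_i^p − x̃₁) = σ·x̃₁/2 + μ. -/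
open Finset Set

lemma beta_pos (m : ℕ) (β : ℕ → ℝ) (h1 : 0 < β 1)
    (hmono : ∀ k, 1 ≤ k → k < m → β k < β (k + 1)) :
    ∀ i, 1 ≤ i → i ≤ m → 0 < β i := by
  intro i
  induction i with
  | zero => omega
  | succ j ih =>
    intro h1j hjm
    rcases Nat.eq_or_lt_of_le h1j with h | h
    · simpa [← h] using h1
    · have hj1 : 1 ≤ j := by omega
      have hjm' : j < m := by omega
      exact (ih hj1 (by omega)).trans (hmono j hj1 hjm')

lemma key (σ μ ρ lam : ℝ) (hσ : 0 < σ) (hρ : 0 < ρ) (hlam : 0 < lam)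
    (m : ℕ) (ω β : ℕ → ℝ)
    (hω : ∀ k, 1 ≤ k → k ≤ m → 0 < ω k)
    (hβ : ∀ k, 1 ≤ k → k ≤ m → 0 < β k)
    (hωsum : ∑ k ∈ Finset.Icc 1 m, ω k = 1) :
    ∃! x : ℝ, 0 < x ∧
      ρ / x + lam * ∑ i ∈ Finset.Icc 1 m, ω i / (β i + x) = σ * x / 2 + μ := by
  set g : ℝ → ℝ := fun x => ρ / x + lam * ∑ i ∈ Finset.Icc 1 m, ω i / (β i + x)
    - σ * x / 2 - μ with hg
  -- sum bounds
  have hSpos : ∀ x : ℝ, 0 < x → 0 ≤ ∑ i ∈ Finset.Icc 1 m, ω i / (β i + x) := by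
    intro x hx
    refine Finset.sum_nonneg fun i hi => ?_
    simp only [Finset.mem_Icc] at hi
    exact le_of_lt (div_pos (hω i hi.1 hi.2) (by linarith [hβ i hi.1 hi.2]))
  have hSle : ∀ x : ℝ, 0 < x → ∑ i ∈ Finset.Icc 1 m, ω i / (β i + x) ≤ 1 / x := by
    intro x hx
    calc ∑ i ∈ Finset.Icc 1 m, ω i / (β i + x)
        ≤ ∑ i ∈ Finset.Icc 1 m, ω i / x := by
          refine Finset.sum_le_sum fun i hi => ?_
          simp only [Finset.mem_Icc] at hi
          have := hβ i hi.1 hi.2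
          exact div_le_div_of_nonneg_left (le_of_lt (hω i hi.1 hi.2)) hx (by linarith)
      _ = 1 / x := by rw [← Finset.sum_div, hωsum]
  -- strict anti
  have hanti : ∀ a b : ℝ, 0 < a → a < b → g b < g a := by
    intro a b ha hab
    have hb : 0 < b := ha.trans hab
    have h1 : ρ / b < ρ / a := div_lt_div_of_pos_left hρ ha hab
    have h2 : ∑ i ∈ Finset.Icc 1 m, ω i / (β i + b)
        ≤ ∑ i ∈ Finset.Icc 1 m, ω i / (β i + a) := by
      refine Finset.sum_le_sum fun i hi => ?_
      simp only [Finset.mem_Icc] at hi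
      have := hβ i hi.1 hi.2
      exact div_le_div_of_nonneg_left (le_of_lt (hω i hi.1 hi.2)) (by linarith) (by linarith)
    have h3 : lam * ∑ i ∈ Finset.Icc 1 m, ω i / (β i + b)
        ≤ lam * ∑ i ∈ Finset.Icc 1 m, ω i / (β i + a) :=
      mul_le_mul_of_nonneg_left h2 (le_of_lt hlam)
    have h4 : σ * a / 2 < σ * b / 2 := by nlinarith
    simp only [hg]
    linarith
  -- endpoints
  set C : ℝ := σ / 2 + |μ| + 1 with hC
  have hCpos : 0 < C := by have := abs_nonneg μ; positivity
  set x₀ : ℝ := min 1 (ρ / C) with hx₀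
  have hx₀pos : 0 < x₀ := lt_min one_pos (div_pos hρ hCpos)
  have hx₀le1 : x₀ ≤ 1 := min_le_left _ _
  have hgx₀ : 0 < g x₀ := by
    have h1 : C ≤ ρ / x₀ := by
      rw [le_div_iff₀ hx₀pos]
      calc C * x₀ ≤ C * (ρ / C) := by
            exact mul_le_mul_of_nonneg_left (min_le_right _ _) (le_of_lt hCpos)
        _ = ρ := by field_simp
    have h2 : σ * x₀ / 2 ≤ σ / 2 := by nlinarith
    have h3 := hSpos x₀ hx₀pos
    have h4 : μ ≤ |μ| := le_abs_self μ
    have h5 : 0 ≤ lam * ∑ i ∈ Finset.Icc 1 m, ω i / (β i + x₀) := by positivity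
    simp only [hg]
    linarith
  set x₁ : ℝ := max 1 (2 * (ρ + lam + |μ| + 1) / σ) with hx₁
  have hx₁ge1 : (1:ℝ) ≤ x₁ := le_max_left _ _
  have hx₁pos : 0 < x₁ := lt_of_lt_of_le one_pos hx₁ge1
  have hgx₁ : g x₁ < 0 := by
    have h1 : ρ / x₁ ≤ ρ := by
      rw [div_le_iff₀ hx₁pos]; nlinarith
    have h2 : lam * ∑ i ∈ Finset.Icc 1 m, ω i / (β i + x₁) ≤ lam := by
      calc lam * ∑ i ∈ Finset.Icc 1 m, ω i / (β i + x₁) ≤ lam * (1 / x₁) :=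
            mul_le_mul_of_nonneg_left (hSle x₁ hx₁pos) (le_of_lt hlam)
        _ ≤ lam * 1 := by
            refine mul_le_mul_of_nonneg_left ?_ (le_of_lt hlam)
            rw [div_le_one hx₁pos]; exact hx₁ge1
        _ = lam := mul_one lam
    have h3 : ρ + lam + |μ| + 1 ≤ σ * x₁ / 2 := by
      have : 2 * (ρ + lam + |μ| + 1) / σ ≤ x₁ := le_max_right _ _
      rw [div_le_iff₀ hσ] at this
      nlinarith
    have h4 : -|μ| ≤ μ := neg_abs_le μ
    simp only [hg]
    linarith
  have hx₀₁ : x₀ ≤ x₁ := hx₀le1.trans hx₁ge1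
  -- continuity
  have hcont : ContinuousOn g (Icc x₀ x₁) := by
    have hne : ∀ x ∈ Icc x₀ x₁, x ≠ 0 := fun x hx =>
      ne_of_gt (lt_of_lt_of_le hx₀pos hx.1)
    refine ContinuousOn.sub (ContinuousOn.sub (ContinuousOn.add ?_ ?_) ?_) continuousOn_const
    · exact continuousOn_const.div continuousOn_id hne
    · refine continuousOn_const.mul (continuousOn_finset_sum _ fun i hi => ?_)
      refine continuousOn_const.div (continuousOn_const.add continuousOn_id) ?_
      intro x hx
      simp only [Finset.mem_Icc] at hi
      have := hβ i hi.1 hi.2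
      have := lt_of_lt_of_le hx₀pos hx.1
      intro h; linarith [h]
    · exact (continuousOn_const.mul continuousOn_id).div_const 2
  have h0mem : (0:ℝ) ∈ Icc (g x₁) (g x₀) := ⟨le_of_lt hgx₁, le_of_lt hgx₀⟩
  obtain ⟨x, hxmem, hgx⟩ := intermediate_value_Icc' hx₀₁ hcont h0mem
  have hxpos : 0 < x := lt_of_lt_of_le hx₀pos hxmem.1
  refine ⟨x, ⟨hxpos, ?_⟩, ?_⟩
  · have : g x = 0 := hgx
    simp only [hg] at this
    linarith
  · intro y ⟨hy, hyeq⟩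
    have hgy : g y = 0 := by simp only [hg]; linarith
    have hgx' : g x = 0 := hgx
    by_contra hne
    rcases lt_or_gt_of_ne hne with h | h
    · have := hanti y x hy h; rw [hgy, hgx'] at this; exact lt_irrefl 0 this
    · have := hanti x y hxpos h; rw [hgy, hgx'] at this; exact lt_irrefl 0 this

theorem stmt8 (σ μ ρ lamn lamp c : ℝ)
    (hσ : 0 < σ) (hρ : 0 < ρ) (hlamn : 0 < lamn) (hlamp : 0 < lamp) (hc : 0 < c)
    (mp mn : ℕ) (hmp : 1 ≤ mp) (hmn : 1 ≤ mn)
    (ωp βp ωn βn : ℕ → ℝ)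
    (hωp : ∀ k, 1 ≤ k → k ≤ mp → 0 < ωp k)
    (hωpsum : ∑ k ∈ Finset.Icc 1 mp, ωp k = 1)
    (hβp1 : 0 < βp 1)
    (hβpmono : ∀ k, 1 ≤ k → k < mp → βp k < βp (k + 1))
    (hωn : ∀ k, 1 ≤ k → k ≤ mn → 0 < ωn k)
    (hωnsum : ∑ k ∈ Finset.Icc 1 mn, ωn k = 1)
    (hβn1 : 0 < βn 1)
    (hβnmono : ∀ k, 1 ≤ k → k < mn → βn k < βn (k + 1)) :
    (∃! x : ℝ, 0 < x ∧
      ρ / x + lamn * ∑ i ∈ Finset.Icc 1 mn, ωn i / (βn i + x) = σ * x / 2 + μ) ∧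
    (∃! x : ℝ, x < 0 ∧
      ρ / x - lamp * ∑ i ∈ Finset.Icc 1 mp, ωp i / (βp i - x) = σ * x / 2 + μ) := by
  have hβnpos := beta_pos mn βn hβn1 hβnmono
  have hβppos := beta_pos mp βp hβp1 hβpmono
  constructor
  · exact key σ μ ρ lamn hσ hρ hlamn mn ωn βn hωn hβnpos hωnsum
  · obtain ⟨y, ⟨hy, heq⟩, huniq⟩ :=
      key σ (-μ) ρ lamp hσ hρ hlamp mp ωp βp hωp hβppos hωpsum
    have hrw : ∀ x : ℝ,
        (ρ / x - lamp * ∑ i ∈ Finset.Icc 1 mp, ωp i / (βp i - x) = σ * x / 2 + μ) ↔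
        (ρ / (-x) + lamp * ∑ i ∈ Finset.Icc 1 mp, ωp i / (βp i + (-x))
          = σ * (-x) / 2 + (-μ)) := by
      intro x
      have : ∀ i : ℕ, βp i + (-x) = βp i - x := fun i => by ring
      simp only [this, div_neg]
      constructor <;> intro h <;> linarith
    refine ⟨-y, ⟨by linarith, ?_⟩, ?_⟩
    · rw [hrw]; simp only [neg_neg]; exact heq
    · intro x ⟨hx, hxeq⟩
      rw [hrw] at hxeq
      have := huniq (-x) ⟨by linarith, hxeq⟩
      linarith
end

section
/- At every (x,y) ∈ ℝ × (0,∞), the partial derivatives ∂v/∂x(x,y) and ∂v/∂y(x,y) exist and satisfy α·∂v/∂x(x,y) + ∂v/∂y(x,y) = u(x), where u(x) := ∑_{j=1}^{m_p+1} K_{j−1} e^{r_{j−1}(x−b*)} if x < b* and u(x) := x − c if x ≥ b*. In particular the directional derivative α·∂v/∂x + ∂v/∂y depends only on x. -/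
open Finset Matrix MeasureTheory

/-!
Because `∑ⱼ K j = b − c`, the right-hand side `u` is continuous, so it has a `C¹` primitive `U`,
and a direct computation gives `v x y = (U x − U (x − α y)) / α` for `y ≥ 0`, i.e.
`v x y = ∫₀ʸ u (x − α s) ds`. Hence `α ∂ₓv + ∂ᵧv = (u x − u (x − α y)) + u (x − α y) = u x`.

For `∑ⱼ K j = b − c`, put `N = ∏ᵢ (X − βᵢ)` and `D = ∏ⱼ (X − rⱼ)`. The partial fraction
coefficients `zⱼ = N(rⱼ) / D'(rⱼ)` of `N / D = ∑ⱼ zⱼ / (x − rⱼ)` solve `A z = e₀`: the first row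
is the behaviour at infinity, the others say `N (βᵢ) = 0`. By Cramer's rule `K j = R zⱼ / rⱼ²`,
and `∑ⱼ zⱼ / rⱼ² = −(N / D)'(0)` is a logarithmic derivative.
-/

open Polynomial Filter Topology

namespace Lagrange

section Field

variable {F : Type*} [Field F] {ι κ : Type*} [DecidableEq ι] {s : Finset ι} {v : ι → F}
  {t : Finset κ} {β : κ → F}

theorem eval_eq_eval_nodal_mul_sum (hvs : Set.InjOn v s) {f : F[X]} (hf : f.degree < #s)
    {x : F} (hx : ∀ i ∈ s, x ≠ v i) :
    f.eval x = (nodal s v).eval x * ∑ i ∈ s, nodalWeight s v i * (x - v i)⁻¹ * f.eval (v i) := by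
  conv_lhs => rw [eq_interpolate hvs hf]
  exact eval_interpolate_not_at_node _ hx

theorem sum_nodalWeight_mul_eval_nodal (hvs : Set.InjOn v s) (hcard : #s = #t + 1) :
    ∑ j ∈ s, nodalWeight s v j * (nodal t β).eval (v j) = 1 := by
  have hdeg : (nodal t β).degree < #s := by
    rw [degree_nodal, hcard]; exact_mod_cast Nat.lt_succ_self _
  have h := coeff_eq_sum hvs hdeg
  rw [hcard, Nat.add_sub_cancel, ← natDegree_nodal (R := F), (nodal_monic).coeff_natDegree] at h
  rw [h]
  refine sum_congr rfl fun j _ => ?_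
  rw [nodalWeight, prod_inv_distrib, div_eq_mul_inv, mul_comm]

theorem sum_nodalWeight_mul_eval_nodal_div_sub (hvs : Set.InjOn v s) (hcard : #t < #s)
    {i : κ} (hi : i ∈ t) (hβ : ∀ j ∈ s, β i ≠ v j) :
    ∑ j ∈ s, nodalWeight s v j * (nodal t β).eval (v j) / (β i - v j) = 0 := by
  have h := eval_eq_eval_nodal_mul_sum hvs (f := nodal t β) (by rwa [degree_nodal, Nat.cast_lt]) hβ
  rw [eval_nodal_at_node hi, eq_comm, mul_eq_zero] at h
  rw [← h.resolve_left (eval_nodal_not_at_node hβ)]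
  exact sum_congr rfl fun j _ => by ring

end Field

section Analysis

variable {𝕜 : Type*} [NontriviallyNormedField 𝕜] {ι κ : Type*}
  {s : Finset ι} {v : ι → 𝕜} {t : Finset κ} {β : κ → 𝕜}

theorem logDeriv_eval_nodal {x : 𝕜} (hx : ∀ i ∈ s, x ≠ v i) :
    logDeriv (fun y => (nodal s v).eval y) x = ∑ i ∈ s, (x - v i)⁻¹ := by
  simp_rw [eval_nodal]
  rw [logDeriv_prod (fun i hi => sub_ne_zero.mpr (hx i hi)) fun i _ => by fun_prop]
  refine sum_congr rfl fun i _ => ?_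
  rw [logDeriv_apply, deriv_sub_const, deriv_id'', one_div]

theorem sum_nodalWeight_mul_eval_nodal_div_sq [DecidableEq ι] (hvs : Set.InjOn v s)
    (hcard : #t < #s) {x : 𝕜} (hxs : ∀ j ∈ s, x ≠ v j) (hxt : ∀ i ∈ t, x ≠ β i) :
    ∑ j ∈ s, nodalWeight s v j * (nodal t β).eval (v j) / (x - v j) ^ 2 =
      (nodal t β).eval x / (nodal s v).eval x *
        (∑ j ∈ s, (x - v j)⁻¹ - ∑ i ∈ t, (x - β i)⁻¹) := by
  set Φ : 𝕜 → 𝕜 := fun y => (nodal t β).eval y / (nodal s v).eval y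
  have hN : (nodal t β).eval x ≠ 0 := eval_nodal_not_at_node hxt
  have hD : (nodal s v).eval x ≠ 0 := eval_nodal_not_at_node hxs
  have hpartial : Φ =ᶠ[𝓝 x]
      fun y => ∑ j ∈ s, nodalWeight s v j * (nodal t β).eval (v j) * (y - v j)⁻¹ := by
    filter_upwards [(eventually_all_finset s).mpr fun j hj => eventually_ne_nhds (hxs j hj)]
      with y hy
    simp only [Φ]
    rw [eval_eq_eval_nodal_mul_sum hvs (by rwa [degree_nodal, Nat.cast_lt]) hy,
      mul_div_cancel_left₀ _ (eval_nodal_not_at_node hy)]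
    exact sum_congr rfl fun j _ => by ring
  have hsum : HasDerivAt
      (fun y => ∑ j ∈ s, nodalWeight s v j * (nodal t β).eval (v j) * (y - v j)⁻¹)
      (∑ j ∈ s, nodalWeight s v j * (nodal t β).eval (v j) * (-1 / (x - v j) ^ 2)) x := by
    refine HasDerivAt.fun_sum fun j hj => ?_
    exact (((hasDerivAt_id x).sub_const (v j)).inv (sub_ne_zero.mpr (hxs j hj))).const_mul _
  have hlog : logDeriv Φ x = ∑ i ∈ t, (x - β i)⁻¹ - ∑ j ∈ s, (x - v j)⁻¹ := by
    rw [logDeriv_div x hN hD (Polynomial.differentiableAt _) (Polynomial.differentiableAt _),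
      logDeriv_eval_nodal hxt, logDeriv_eval_nodal hxs]
  have hderiv := (hsum.congr_of_eventuallyEq hpartial).deriv
  rw [logDeriv_apply, hderiv, div_eq_iff (div_ne_zero hN hD)] at hlog
  calc ∑ j ∈ s, nodalWeight s v j * (nodal t β).eval (v j) / (x - v j) ^ 2
      = -∑ j ∈ s, nodalWeight s v j * (nodal t β).eval (v j) * (-1 / (x - v j) ^ 2) := by
        rw [← sum_neg_distrib]; exact sum_congr rfl fun j _ => by ring
    _ = _ := by rw [hlog]; ring

end Analysis

end Lagrange

theorem cof_zero_eq_det_mul_of_mulVec_eq_single {n : ℕ} {A : Matrix (Fin (n + 1)) (Fin (n + 1)) ℝ}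
    {z : Fin (n + 1) → ℝ} (hz : A *ᵥ z = Pi.single 0 1) (j : Fin (n + 1)) :
    cof A 0 j = A.det * z j := by
  have h : adjugate A *ᵥ (A *ᵥ z) = A.det • z := by
    rw [mulVec_mulVec, adjugate_mul, smul_mulVec, one_mulVec]
  rw [hz, mulVec_single_one] at h
  have hj := congrFun h j
  rw [col_apply, Pi.smul_apply, smul_eq_mul, adjugate_fin_succ_eq_det_submatrix] at hj
  rw [cof, ← hj, add_comm]

section Interlacing

variable {α : Type*} [Preorder α] {r β : ℕ → α} {n : ℕ}

theorem strictMonoOn_of_interlacing (h : ∀ k, 1 ≤ k → k ≤ n → r (k - 1) < β k ∧ β k < r k) :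
    StrictMonoOn r (Set.Iic n) :=
  strictMonoOn_Iic_of_lt_succ fun m hm => by
    obtain ⟨hlt, hgt⟩ := h (m + 1) (by omega) hm
    rw [Nat.add_sub_cancel] at hlt
    rw [Order.succ_eq_add_one]
    exact hlt.trans hgt

theorem apply_zero_le_of_interlacing (h : ∀ k, 1 ≤ k → k ≤ n → r (k - 1) < β k ∧ β k < r k)
    {j : ℕ} (hj : j ≤ n) : r 0 ≤ r j :=
  (strictMonoOn_of_interlacing h).monotoneOn (Set.mem_Iic.mpr (Nat.zero_le n)) hj (Nat.zero_le j)

theorem ne_of_interlacing (h : ∀ k, 1 ≤ k → k ≤ n → r (k - 1) < β k ∧ β k < r k)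
    {i j : ℕ} (hi : i ∈ Icc 1 n) (hj : j ≤ n) : β i ≠ r j := by
  rw [mem_Icc] at hi
  have hmono := (strictMonoOn_of_interlacing h).monotoneOn
  obtain ⟨hlt, hgt⟩ := h i hi.1 hi.2
  rcases Nat.lt_or_ge j i with hji | hij
  · exact (lt_of_le_of_lt (hmono (by simp; omega) (by simp; omega) (by omega)) hlt).ne'
  · exact (lt_of_lt_of_le hgt (hmono (by simpa using hi.2) hj hij)).ne

end Interlacing

open Lagrange in
theorem mulVec_nodalWeight_mul_eval_nodal {F : Type*} [Field F] {n : ℕ} {β r : ℕ → F}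
    {A : Matrix (Fin (n + 1)) (Fin (n + 1)) F} (hvs : Set.InjOn r (range (n + 1)))
    (hβr : ∀ i ∈ Icc 1 n, ∀ j ∈ range (n + 1), β i ≠ r j)
    (hA : ∀ i j : Fin (n + 1), A i j = if (i : ℕ) = 0 then 1 else β i / (β i - r j)) :
    A *ᵥ (fun j => nodalWeight (range (n + 1)) r j * (nodal (Icc 1 n) β).eval (r j)) =
      Pi.single 0 1 := by
  ext i
  simp only [mulVec, dotProduct, hA]
  by_cases hi : (i : ℕ) = 0
  · simp only [hi, if_true, one_mul]
    rw [Fin.sum_univ_eq_sum_range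
        (fun j => nodalWeight (range (n + 1)) r j * (nodal (Icc 1 n) β).eval (r j)),
      sum_nodalWeight_mul_eval_nodal hvs (by simp), (Fin.ext hi : i = 0), Pi.single_eq_same]
  · simp only [hi, if_false]
    have hi' : (i : ℕ) ∈ Icc 1 n := mem_Icc.mpr ⟨by omega, by omega⟩
    rw [Fin.sum_univ_eq_sum_range (fun j => β i / (β i - r j) *
          (nodalWeight (range (n + 1)) r j * (nodal (Icc 1 n) β).eval (r j))),
      Pi.single_eq_of_ne (fun h => hi (by simp [h])), ← mul_zero (β i),
      ← sum_nodalWeight_mul_eval_nodal_div_sub hvs (by simp) hi' (hβr i hi'), mul_sum]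
    exact sum_congr rfl fun j _ => by ring

open Lagrange in
theorem sum_K_eq_sum_inv_sub_sum_inv (mp : ℕ) (βp r : ℕ → ℝ) (hr0 : 0 < r 0)
    (hinter : ∀ k, 1 ≤ k → k ≤ mp → r (k - 1) < βp k ∧ βp k < r k)
    (A : Matrix (Fin (mp + 1)) (Fin (mp + 1)) ℝ)
    (hA : ∀ i j : Fin (mp + 1), A i j = if (i : ℕ) = 0 then 1 else βp i / (βp i - r j))
    (hdet : A.det ≠ 0) (R : ℝ)
    (hR : R = (∏ k ∈ range (mp + 1), r k) / ∏ k ∈ Icc 1 mp, βp k) (K : ℕ → ℝ)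
    (hK : ∀ j : Fin (mp + 1), K j = R * cof A 0 j / ((r j) ^ 2 * A.det)) :
    ∑ j ∈ range (mp + 1), K j = ∑ j ∈ range (mp + 1), 1 / r j - ∑ i ∈ Icc 1 mp, 1 / βp i := by
  have hr : ∀ j ∈ range (mp + 1), 0 < r j := fun j hj =>
    hr0.trans_le (apply_zero_le_of_interlacing hinter (by simpa [Nat.lt_succ_iff] using hj))
  have hβ : ∀ i ∈ Icc 1 mp, 0 < βp i := fun i hi => by
    rw [mem_Icc] at hi
    exact (hr (i - 1) (by simp; omega)).trans (hinter i hi.1 hi.2).1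
  have hvs : Set.InjOn r (range (mp + 1)) :=
    (strictMonoOn_of_interlacing hinter).injOn.mono fun j hj => by
      simpa [Nat.lt_succ_iff] using hj
  have hAz := mulVec_nodalWeight_mul_eval_nodal hvs
    (fun i hi j hj => ne_of_interlacing hinter hi (by simpa [Nat.lt_succ_iff] using hj)) hA
  have hKz : ∀ j ∈ range (mp + 1), K j = R *
      (nodalWeight (range (mp + 1)) r j * (nodal (Icc 1 mp) βp).eval (r j) / (0 - r j) ^ 2) := by
    intro j hj
    rw [hK ⟨j, mem_range.mp hj⟩, cof_zero_eq_det_mul_of_mulVec_eq_single hAz, zero_sub, neg_sq]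
    field_simp
  rw [sum_congr rfl hKz, ← mul_sum, sum_nodalWeight_mul_eval_nodal_div_sq hvs (by simp)
    (fun j hj => (hr j hj).ne) (fun i hi => (hβ i hi).ne), eval_nodal, eval_nodal, hR]
  have hprod_r := (prod_pos hr).ne'
  have hprod_β := (prod_pos hβ).ne'
  simp only [zero_sub, prod_neg, inv_neg, sum_neg_distrib, card_range, Nat.card_Icc,
    Nat.add_sub_cancel, one_div, pow_succ]
  field_simp
  ring

theorem hasDerivAt_ite_lt {f g f' g' : ℝ → ℝ} {a : ℝ} (hf : ∀ x, HasDerivAt f (f' x) x)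
    (hg : ∀ x, HasDerivAt g (g' x) x) (hval : f a = g a) (hderiv : f' a = g' a) (x : ℝ) :
    HasDerivAt (fun t => if t < a then f t else g t) (if x < a then f' x else g' x) x := by
  rcases lt_trichotomy x a with hxa | rfl | hax
  · rw [if_pos hxa]
    refine (hf x).congr_of_eventuallyEq ?_
    filter_upwards [Iio_mem_nhds hxa] with t ht
    exact if_pos ht
  · rw [if_neg (lt_irrefl x), ← hderiv]
    have hleft : HasDerivWithinAt (fun t => if t < x then f t else g t) (f' x) (Set.Iic x) x :=
      (hf x).hasDerivWithinAt.congr (fun t ht => by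
        rcases (Set.mem_Iic.mp ht).lt_or_eq with htx | rfl
        · rw [if_pos htx]
        · rw [if_neg (lt_irrefl t), hval]) (by rw [if_neg (lt_irrefl x), hval])
    have hright : HasDerivWithinAt (fun t => if t < x then f t else g t) (f' x) (Set.Ici x) x :=
      (hderiv ▸ hg x).hasDerivWithinAt.congr (fun t ht => by
        rw [if_neg (not_lt.mpr (Set.mem_Ici.mp ht))]) (by rw [if_neg (lt_irrefl x)])
    simpa [Set.Iic_union_Ici] using hleft.union hright
  · rw [if_neg (not_lt.mpr hax.le)]
    refine (hg x).congr_of_eventuallyEq ?_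
    filter_upwards [Ioi_mem_nhds hax] with t ht
    rw [if_neg (not_lt.mpr (Set.mem_Ioi.mp ht).le)]

section Transport

open Real

variable {ι : Type*} (s : Finset ι) (K r : ι → ℝ) (b c α : ℝ)

noncomputable def source (x : ℝ) : ℝ :=
  if x < b then ∑ j ∈ s, K j * exp (r j * (x - b)) else x - c

noncomputable def sourcePrimitive (x : ℝ) : ℝ :=
  if x < b then ∑ j ∈ s, K j / r j * exp (r j * (x - b))
  else ∑ j ∈ s, K j / r j + ((x - c) ^ 2 - (b - c) ^ 2) / 2

noncomputable def transportSolution (x y : ℝ) : ℝ :=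
  if x < b then
    ∑ j ∈ s, K j / (α * r j) * (1 - exp (-(α * r j * y))) * exp (r j * (x - b))
  else if x < α * y + b then
    (∑ j ∈ s, K j / (α * r j) * (1 - exp (-(α * r j * (y - (x - b) / α)))))
      + ((x - c) ^ 2 - (b - c) ^ 2) / (2 * α)
  else (x - c) * y - α * y ^ 2 / 2

variable {s K r b c α}

theorem hasDerivAt_sourcePrimitive (hr : ∀ j ∈ s, r j ≠ 0) (hK : ∑ j ∈ s, K j = b - c) (x : ℝ) :
    HasDerivAt (sourcePrimitive s K r b c) (source s K r b c x) x := by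
  unfold sourcePrimitive source
  refine hasDerivAt_ite_lt (f' := fun x => ∑ j ∈ s, K j * exp (r j * (x - b)))
    (g' := fun x => x - c) (fun x => HasDerivAt.fun_sum fun j hj => ?_) (fun x => ?_) ?_ ?_ x
  · refine (((hasDerivAt_id' x).sub_const b).const_mul (r j)).exp.const_mul (K j / r j)
      |>.congr_deriv ?_
    field_simp [hr j hj]
  · refine ((((hasDerivAt_id x).sub_const c).pow 2).sub_const _).div_const 2 |>.const_add _
      |>.congr_deriv ?_
    simp
  · simp
  · simp [hK]

theorem transportSolution_eq (hα : 0 < α) (hr : ∀ j ∈ s, r j ≠ 0) (x : ℝ) {y : ℝ} (hy : 0 ≤ y) :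
    transportSolution s K r b c α x y =
      (sourcePrimitive s K r b c x - sourcePrimitive s K r b c (x - α * y)) / α := by
  have hαy : 0 ≤ α * y := mul_nonneg hα.le hy
  unfold transportSolution sourcePrimitive
  split_ifs <;> try linarith
  · rw [← sum_sub_distrib, sum_div]
    refine sum_congr rfl fun j hj => ?_
    rw [show r j * (x - α * y - b) = -(α * r j * y) + r j * (x - b) by ring, exp_add]
    field_simp [hr j hj]
  · have hsum : ∑ j ∈ s, K j / (α * r j) * (1 - exp (-(α * r j * (y - (x - b) / α)))) =
        (∑ j ∈ s, K j / r j - ∑ j ∈ s, K j / r j * exp (r j * (x - α * y - b))) / α := by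
      rw [← sum_sub_distrib, sum_div]
      refine sum_congr rfl fun j hj => ?_
      rw [show -(α * r j * (y - (x - b) / α)) = r j * (x - α * y - b) by field_simp; ring]
      field_simp [hr j hj]
    rw [hsum]
    ring
  · field_simp
    ring

end Transport

theorem stmt11_general (c : ℝ)
    (mp : ℕ)
    (βp : ℕ → ℝ)
    (r : ℕ → ℝ)
    (hr0 : 0 < r 0)
    (hinter : ∀ k, 1 ≤ k → k ≤ mp → r (k - 1) < βp k ∧ βp k < r k)
    (A : Matrix (Fin (mp + 1)) (Fin (mp + 1)) ℝ)
    (hA : ∀ i j : Fin (mp + 1), A i j = if (i : ℕ) = 0 then 1 else βp i / (βp i - r j))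
    (hdet : A.det ≠ 0)
    (R : ℝ)
    (hR : R = (∏ k ∈ Finset.range (mp + 1), r k) / ∏ k ∈ Finset.Icc 1 mp, βp k)
    (K : ℕ → ℝ)
    (hK : ∀ j : Fin (mp + 1), K j = R * cof A 0 j / ((r j) ^ 2 * A.det))
    (b : ℝ)
    (hb : b = c + (∑ i ∈ Finset.range (mp + 1), 1 / r i) - ∑ i ∈ Finset.Icc 1 mp, 1 / βp i)
    (α : ℝ) (hα : 0 < α)
    (v : ℝ → ℝ → ℝ)
    (hv : ∀ x y : ℝ,
      v x y =
        if x < b then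
          ∑ j ∈ Finset.range (mp + 1),
            K j / (α * r j) * (1 - Real.exp (-(α * r j * y))) * Real.exp (r j * (x - b))
        else if x < α * y + b then
          (∑ j ∈ Finset.range (mp + 1),
            K j / (α * r j) * (1 - Real.exp (-(α * r j * (y - (x - b) / α)))))
            + ((x - c) ^ 2 - (b - c) ^ 2) / (2 * α)
        else (x - c) * y - α * y ^ 2 / 2)
    :
    ∀ x y : ℝ, 0 < y →
      ∃ vx vy : ℝ,
        HasDerivAt (fun t => v t y) vx x ∧
        HasDerivAt (fun t => v x t) vy y ∧
        α * vx + vy =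
          (if x < b then ∑ j ∈ Finset.range (mp + 1), K j * Real.exp (r j * (x - b))
           else x - c) := by
  intro x y hy
  set s := range (mp + 1)
  set U := sourcePrimitive s K r b c
  set u := source s K r b c
  have hr : ∀ j ∈ s, r j ≠ 0 := fun j hj => (hr0.trans_le
    (apply_zero_le_of_interlacing hinter (by simpa [s, Nat.lt_succ_iff] using hj))).ne'
  have hU : ∀ w, HasDerivAt U (u w) w := hasDerivAt_sourcePrimitive hr <| by
    rw [sum_K_eq_sum_inv_sub_sum_inv mp βp r hr0 hinter A hA hdet R hR K hK, hb]
    ring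
  have hvU : ∀ x t, 0 ≤ t → v x t = (U x - U (x - α * t)) / α := fun x t ht =>
    (hv x t).trans (transportSolution_eq hα hr x ht)
  refine ⟨(u x - u (x - α * y)) / α, u (x - α * y), ?_, ?_, ?_⟩
  · rw [show (fun t => v t y) = fun t => (U t - U (t - α * y)) / α from
      funext fun t => hvU t y hy.le]
    exact ((hU x).sub ((hU (x - α * y)).comp_sub_const x (α * y))).div_const α
  · have hline : HasDerivAt (fun t => x - α * t) (-α) y := by
      simpa using ((hasDerivAt_id' y).const_mul α).const_sub x
    refine ((((hU (x - α * y)).comp y hline).const_sub (U x)).div_const α).congr_of_eventuallyEq ?_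
      |>.congr_deriv (by field_simp)
    filter_upwards [Ioi_mem_nhds hy] with t ht
    exact hvU x t (le_of_lt ht)
  · change _ = u x
    field_simp
    ring

theorem stmt11 (σ μ ρ lamn lamp c : ℝ)
    (hσ : 0 < σ) (hρ : 0 < ρ) (hlamn : 0 < lamn) (hlamp : 0 < lamp) (hc : 0 < c)
    (mp mn : ℕ) (hmp : 1 ≤ mp) (hmn : 1 ≤ mn)
    (ωp βp ωn βn : ℕ → ℝ)
    (hωp : ∀ k, 1 ≤ k → k ≤ mp → 0 < ωp k)
    (hωpsum : ∑ k ∈ Finset.Icc 1 mp, ωp k = 1)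
    (hβp1 : 0 < βp 1)
    (hβpmono : ∀ k, 1 ≤ k → k < mp → βp k < βp (k + 1))
    (hωn : ∀ k, 1 ≤ k → k ≤ mn → 0 < ωn k)
    (hωnsum : ∑ k ∈ Finset.Icc 1 mn, ωn k = 1)
    (hβn1 : 0 < βn 1)
    (hβnmono : ∀ k, 1 ≤ k → k < mn → βn k < βn (k + 1))
    (r : ℕ → ℝ)
    (hroot : ∀ j, j ≤ mp →
      σ ^ 2 * (r j) ^ 2 / 2 + μ * r j - (ρ + lamn + lamp)
        + lamp * ∑ i ∈ Finset.Icc 1 mp, ωp i * βp i / (βp i - r j)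
        + lamn * ∑ i ∈ Finset.Icc 1 mn, ωn i * βn i / (r j + βn i) = 0)
    (hr0 : 0 < r 0)
    (hinter : ∀ k, 1 ≤ k → k ≤ mp → r (k - 1) < βp k ∧ βp k < r k)
    (A : Matrix (Fin (mp + 1)) (Fin (mp + 1)) ℝ)
    (hA : ∀ i j : Fin (mp + 1), A i j = if (i : ℕ) = 0 then 1 else βp i / (βp i - r j))
    (hdet : A.det ≠ 0)
    (R : ℝ)
    (hR : R = (∏ k ∈ Finset.range (mp + 1), r k) / ∏ k ∈ Finset.Icc 1 mp, βp k)
    (K : ℕ → ℝ)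
    (hK : ∀ j : Fin (mp + 1), K j = R * cof A 0 j / ((r j) ^ 2 * A.det))
    (b : ℝ)
    (hb : b = c + (∑ i ∈ Finset.range (mp + 1), 1 / r i) - ∑ i ∈ Finset.Icc 1 mp, 1 / βp i)
    (α : ℝ) (hα : 0 < α)
    (v : ℝ → ℝ → ℝ)
    (hv : ∀ x y : ℝ,
      v x y =
        if x < b then
          ∑ j ∈ Finset.range (mp + 1),
            K j / (α * r j) * (1 - Real.exp (-(α * r j * y))) * Real.exp (r j * (x - b))
        else if x < α * y + b then
          (∑ j ∈ Finset.range (mp + 1),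
            K j / (α * r j) * (1 - Real.exp (-(α * r j * (y - (x - b) / α)))))
            + ((x - c) ^ 2 - (b - c) ^ 2) / (2 * α)
        else (x - c) * y - α * y ^ 2 / 2)
    :
    ∀ x y : ℝ, 0 < y →
      ∃ vx vy : ℝ,
        HasDerivAt (fun t => v t y) vx x ∧
        HasDerivAt (fun t => v x t) vy y ∧
        α * vx + vy =
          (if x < b then ∑ j ∈ Finset.range (mp + 1), K j * Real.exp (r j * (x - b))
           else x - c) :=
  stmt11_general c mp βp r hr0 hinter A hA hdet R hR K hK b hb α hα v hv
end
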